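/- If a hermitian matrix F and a unit vector ψ satisfy Tr(|ψ⟩⟨ψ| [F,G]) = 0 for all hermitian matrices G, then [|ψ⟩⟨ψ|, F] = 0, i.e. ψ is an eigenvector of F. -/

import Mathlib

/-!
Cyclicity of the trace gives `Tr(ρ[F,G]) = Tr([ρ,F] G)`. Since every complex matrix is
`H₁ + i H₂` with `H₁, H₂` hermitian, the hypothesis gives `Tr([ρ,F] M) = 0` for every `M`,
in particular for `M = [ρ,F]ᴴ`, and positivity of `Tr(C Cᴴ)` forces `[ρ,F] = 0`.
Finally, if `ρ = |ψ⟩⟨ψ|` commutes with `F`, then `Fψ = Fρψ = ρFψ = ⟨ψ, Fψ⟩ ψ`.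
-/

open Matrix
open scoped ComplexOrder ComplexStarModule

variable {n : Type*} [Fintype n]

theorem Matrix.trace_mul_commutator {R : Type*} [CommRing R] (A B C : Matrix n n R) :
    (A * (B * C - C * B)).trace = ((A * B - B * A) * C).trace := by
  rw [mul_sub, sub_mul, trace_sub, trace_sub, ← Matrix.mul_assoc, ← Matrix.mul_assoc,
    trace_mul_cycle A C B]

theorem Matrix.eq_zero_of_forall_isHermitian_trace_mul_eq_zero {C : Matrix n n ℂ}
    (h : ∀ G : Matrix n n ℂ, G.IsHermitian → (C * G).trace = 0) : C = 0 := by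
  have hself : (C * Cᴴ).trace = 0 := by
    rw [← realPart_add_I_smul_imaginaryPart Cᴴ, mul_add, Matrix.mul_smul, trace_add,
      trace_smul, h _ (ℜ Cᴴ).2, h _ (ℑ Cᴴ).2, smul_zero, add_zero]
  exact trace_mul_conjTranspose_self_eq_zero_iff.mp hself

theorem Matrix.mulVec_eq_smul_of_commute_vecMulVec {R : Type*} [CommSemiring R]
    {ψ φ : n → R} (hφψ : φ ⬝ᵥ ψ = 1) {F : Matrix n n R}
    (hcomm : vecMulVec ψ φ * F = F * vecMulVec ψ φ) :
    F *ᵥ ψ = (φ ⬝ᵥ F *ᵥ ψ) • ψ := by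
  have hproj : vecMulVec ψ φ *ᵥ ψ = ψ := by
    rw [vecMulVec_mulVec, hφψ, MulOpposite.op_one, one_smul]
  calc F *ᵥ ψ = F *ᵥ (vecMulVec ψ φ *ᵥ ψ) := by rw [hproj]
    _ = vecMulVec ψ φ *ᵥ (F *ᵥ ψ) := by rw [mulVec_mulVec, mulVec_mulVec, hcomm]
    _ = (φ ⬝ᵥ F *ᵥ ψ) • ψ := by rw [vecMulVec_mulVec, op_smul_eq_smul]

theorem fubini_study_nondegenerate_general (d : ℕ) (ψ : Fin d → ℂ) (hψ : star ψ ⬝ᵥ ψ = 1)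
    (F : Matrix (Fin d) (Fin d) ℂ)
    (h : ∀ G : Matrix (Fin d) (Fin d) ℂ, G = Gᴴ →
      (vecMulVec ψ (star ψ) * (F * G - G * F)).trace = 0) :
    vecMulVec ψ (star ψ) * F - F * vecMulVec ψ (star ψ) = 0 ∧
      ∃ c : ℂ, F *ᵥ ψ = c • ψ := by
  have hcomm : vecMulVec ψ (star ψ) * F - F * vecMulVec ψ (star ψ) = 0 :=
    eq_zero_of_forall_isHermitian_trace_mul_eq_zero fun G hG => by
      rw [← trace_mul_commutator]
      exact h G hG.symm
  exact ⟨hcomm, _, mulVec_eq_smul_of_commute_vecMulVec hψ (sub_eq_zero.mp hcomm)⟩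

/-- Nondegeneracy of the Fubini–Study form: if `Tr(|ψ⟩⟨ψ|[F,G]) = 0` for all
hermitian `G`, then `[|ψ⟩⟨ψ|, F] = 0`, i.e. `ψ` is an eigenvector of `F`. -/
theorem fubini_study_nondegenerate (d : ℕ) (ψ : Fin d → ℂ) (hψ : star ψ ⬝ᵥ ψ = 1)
    (F : Matrix (Fin d) (Fin d) ℂ) (hF : F = Fᴴ)
    (h : ∀ G : Matrix (Fin d) (Fin d) ℂ, G = Gᴴ →
      (vecMulVec ψ (star ψ) * (F * G - G * F)).trace = 0) :
    vecMulVec ψ (star ψ) * F - F * vecMulVec ψ (star ψ) = 0 ∧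
      ∃ c : ℂ, F *ᵥ ψ = c • ψ :=
  fubini_study_nondegenerate_general d ψ hψ F h
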